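/- Fix d ≥ 1, a tuple n = (n_1,…,n_d) of positive integers, and ρ ∈ [d]. In the polynomial ring ℤ[y_{s,t} : s,t ∈ [d]] the following identity holds: Σ_{T star tree in T_ρ(n)} ∏_{s,t∈[d]} y_{s,t}^{ch_s(t,1)} = ∏_{s∈[d]} ( Σ_{t∈[d]} y_{s,t} )^{n_s − 1} · Σ_{A ∈ Cay_d^ρ} ∏_{(s,t)∈A} y_{s,t}. -/

import Mathlib

open scoped Classical

/-- The vertex set of multitype Cayley trees of profile `n`: the vertex `⟨t, i⟩`
has type `t` and label `i`. -/
abbrev Vtx (d : ℕ) (n : Fin d → ℕ) := Σ t : Fin d, Fin (n t)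

/-- A rooted multitype Cayley tree of profile `n`, encoded by the pair consisting of
its root vertex and its parent function (edges are oriented toward the root): the
root is a fixed point of the parent function and every vertex eventually reaches
the root by iterating it. -/
def MTree (d : ℕ) (n : Fin d → ℕ) : Type :=
  {p : Vtx d n × (Vtx d n → Vtx d n) //
    p.2 p.1 = p.1 ∧ ∀ v, ∃ k, p.2^[k] v = p.1}

namespace MTree

variable {d : ℕ} {n : Fin d → ℕ}

/-- The root vertex of a rooted multitype Cayley tree. -/
def root (T : MTree d n) : Vtx d n := T.1.1

/-- The parent function of a rooted multitype Cayley tree. -/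
def parent (T : MTree d n) : Vtx d n → Vtx d n := T.1.2

/-- `T.ch s w` is the number of children of type `s` of the vertex `w` in `T`. -/
noncomputable def ch (T : MTree d n) (s : Fin d) (w : Vtx d n) : ℕ :=
  Nat.card {v : Vtx d n // v.1 = s ∧ v ≠ T.root ∧ T.parent v = w}

/-- `T.etype s t` is the number of edges of type `(s,t)` of `T`, i.e. edges going
from a vertex of type `s` to a vertex of type `t` (edges oriented toward the root). -/
noncomputable def etype (T : MTree d n) (s t : Fin d) : ℕ :=
  Nat.card {v : Vtx d n // v ≠ T.root ∧ v.1 = s ∧ (T.parent v).1 = t}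

end MTree

/-- `Cay d ρ` is the set of (unitype) Cayley trees with vertex set `Fin d`, rooted at
`ρ` and oriented toward the root, encoded by parent functions: the oriented edges of
`A` are the pairs `(s, A.1 s)` for `s ≠ ρ`. -/
def Cay (d : ℕ) (ρ : Fin d) : Type :=
  {f : Fin d → Fin d // f ρ = ρ ∧ ∀ v, ∃ k, f^[k] v = ρ}

noncomputable instance (d : ℕ) (n : Fin d → ℕ) : Fintype (MTree d n) :=
  Subtype.fintype _

noncomputable instance (d : ℕ) (ρ : Fin d) : Fintype (Cay d ρ) :=
  Subtype.fintype _

/-!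
In a star tree every vertex of label `≠ 1` is a leaf, so every parent has label `1` and the
root is `(ρ, 1)`. Such a tree is therefore the same as a choice of a parent type for every
vertex: on the label-`1` vertices this choice is a Cayley tree on `[d]` rooted at `ρ`, and on
the `n_s - 1` remaining vertices of type `s` it is free. The weight factorizes along this
decomposition, and summing over the free choices gives `∏_s (∑_t y_{s,t})^{n_s - 1}`.
-/

open Finset

section StarTrees

variable {d : ℕ} {n : Fin d → ℕ} (hn : ∀ t, 0 < n t)

/-- The vertex of type `t` and label `0`, which is the paper's label `1`. -/
def firstVtx (t : Fin d) : Vtx d n := ⟨t, ⟨0, hn t⟩⟩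

abbrev OtherLabel (s : Fin d) : Type := {i : Fin (n s) // i ≠ ⟨0, hn s⟩}

lemma firstVtx_injective : Function.Injective (firstVtx hn) :=
  fun _ _ h => congrArg Sigma.fst h

lemma eq_firstVtx_of_label_eq_zero {v : Vtx d n} (h : (v.2 : ℕ) = 0) : v = firstVtx hn v.1 :=
  Sigma.ext rfl (heq_of_eq (Fin.ext h))

lemma iterate_firstVtx_eq_firstVtx_iff {P : Vtx d n → Vtx d n} {A : Fin d → Fin d}
    (h : Function.Semiconj (firstVtx hn) A P) (k : ℕ) (s ρ : Fin d) :
    P^[k] (firstVtx hn s) = firstVtx hn ρ ↔ A^[k] s = ρ := by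
  rw [← h.iterate_right k s, (firstVtx_injective hn).eq_iff]

lemma prod_erase_firstVtx {M : Type*} [CommMonoid M] (ρ : Fin d) (g : Vtx d n → M) :
    ∏ v ∈ univ.erase (firstVtx hn ρ), g v =
      (∏ s ∈ univ.erase ρ, g (firstVtx hn s)) *
        ∏ s, ∏ i : OtherLabel hn s, g ⟨s, i⟩ := by
  set g' : Vtx d n → M := fun v => if v = firstVtx hn ρ then 1 else g v
  have hg' : ∀ v ≠ firstVtx hn ρ, g' v = g v := fun v hv => if_neg hv
  calc ∏ v ∈ univ.erase (firstVtx hn ρ), g v = ∏ v, g' v := by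
        rw [← prod_erase (f := g') univ (if_pos rfl)]
        exact prod_congr rfl fun v hv => (hg' v (ne_of_mem_erase hv)).symm
    _ = ∏ s, (g' (firstVtx hn s) * ∏ i : OtherLabel hn s, g' ⟨s, i⟩) := by
        rw [Fintype.prod_sigma]
        exact prod_congr rfl fun s _ => Fintype.prod_eq_mul_prod_subtype_ne _ _
    _ = _ := by
        rw [prod_mul_distrib,
          ← prod_erase (f := fun s => g' (firstVtx hn s)) univ (a := ρ) (if_pos rfl)]
        congr 1
        · exact prod_congr rfl fun s hs =>
            hg' _ ((firstVtx_injective hn).ne (ne_of_mem_erase hs))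
        · refine prod_congr rfl fun s _ => prod_congr rfl fun i _ => hg' _ fun h => i.2 ?_
          exact Fin.ext (congrArg (fun v : Vtx d n => (v.2 : ℕ)) h)

lemma sum_pi_prod_eq_prod_sum_pow {R : Type*} [CommSemiring R] {κ : Fin d → Type*}
    [∀ s, Fintype (κ s)] [∀ s, DecidableEq (κ s)] (y : Fin d → Fin d → R) :
    ∑ f : ∀ s, κ s → Fin d, ∏ s, ∏ i, y s (f s i) =
      ∏ s, (∑ t, y s t) ^ Fintype.card (κ s) := by
  rw [← Fintype.prod_sum fun s (g : κ s → Fin d) => ∏ i, y s (g i)]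
  refine prod_congr rfl fun s _ => ?_
  rw [← Fintype.prod_sum fun (_ : κ s) t => y s t, prod_const, card_univ]

namespace MTree

variable (T : MTree d n)

lemma parent_root : T.parent T.root = T.root := T.2.1

lemma exists_iterate_parent_eq_root (v : Vtx d n) : ∃ k, T.parent^[k] v = T.root := T.2.2 v

lemma exists_child_root {w : Vtx d n} (hw : w ≠ T.root) :
    ∃ v ≠ T.root, T.parent v = T.root := by
  obtain ⟨k, hk⟩ := T.exists_iterate_parent_eq_root w
  induction k generalizing w with
  | zero => exact absurd hk hw
  | succ k ih =>
    by_cases h : T.parent w = T.root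
    · exact ⟨w, hw, h⟩
    · exact ih h (by rwa [Function.iterate_succ_apply] at hk)

lemma ch_parent_pos {v : Vtx d n} (hv : v ≠ T.root) : 0 < T.ch v.1 (T.parent v) :=
  have : Nonempty {u : Vtx d n // u.1 = v.1 ∧ u ≠ T.root ∧ T.parent u = T.parent v} :=
    ⟨⟨v, rfl, hv, rfl⟩⟩
  Nat.card_pos

lemma ch_eq_card (s : Fin d) (w : Vtx d n) :
    T.ch s w = #{v | v.1 = s ∧ v ≠ T.root ∧ T.parent v = w} := by
  rw [ch, Nat.card_eq_fintype_card, Fintype.card_subtype]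

def IsStar : Prop :=
  ∀ (s t : Fin d) (i : Fin (n t)), (i : ℕ) ≠ 0 → T.ch s ⟨t, i⟩ = 0

-- Definitionally the instance found for the unfolded predicate, so that sums over star trees
-- agree with sums over the subtype written out in full.
noncomputable instance : DecidablePred (IsStar (d := d) (n := n)) := fun T =>
  inferInstanceAs
    (Decidable (∀ (s t : Fin d) (i : Fin (n t)), (i : ℕ) ≠ 0 → T.ch s ⟨t, i⟩ = 0))

lemma isStar_of_forall_label_parent_eq_zero (h : ∀ v, ((T.parent v).2 : ℕ) = 0) :
    T.IsStar := by
  intro s t i hi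
  rw [ch, Nat.card_eq_zero]
  refine Or.inl ⟨fun ⟨v, _, _, hv⟩ => hi ?_⟩
  have := h v
  rwa [hv] at this

namespace IsStar

variable {T} (hT : T.IsStar)
include hT

lemma label_parent_eq_zero {v : Vtx d n} (hv : v ≠ T.root) : ((T.parent v).2 : ℕ) = 0 := by
  by_contra h
  exact (T.ch_parent_pos hv).ne' (hT v.1 _ (T.parent v).2 h)

lemma label_root_eq_zero : (T.root.2 : ℕ) = 0 := by
  by_contra h
  have hne : (⟨T.root.1, ⟨0, T.root.2.pos⟩⟩ : Vtx d n) ≠ T.root :=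
    fun e => h (congrArg (fun v : Vtx d n => (v.2 : ℕ)) e).symm
  obtain ⟨v, hv, hpv⟩ := T.exists_child_root hne
  exact h (hpv ▸ hT.label_parent_eq_zero hv)

lemma root_eq_firstVtx {ρ : Fin d} (hroot : T.root.1 = ρ) :
    T.root = firstVtx hn ρ :=
  (eq_firstVtx_of_label_eq_zero hn hT.label_root_eq_zero).trans (congrArg _ hroot)

lemma parent_eq_firstVtx (v : Vtx d n) :
    T.parent v = firstVtx hn (T.parent v).1 := by
  refine eq_firstVtx_of_label_eq_zero hn ?_
  by_cases hv : v = T.root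
  · rw [hv, T.parent_root]
    exact hT.label_root_eq_zero
  · exact hT.label_parent_eq_zero hv

lemma parent_eq_firstVtx_iff {v : Vtx d n} {t : Fin d} :
    T.parent v = firstVtx hn t ↔ (T.parent v).1 = t := by
  conv_lhs => rw [hT.parent_eq_firstVtx hn v]
  exact (firstVtx_injective hn).eq_iff

lemma prod_pow_ch {M : Type*} [CommMonoid M] (y : Fin d → Fin d → M) :
    ∏ s, ∏ t, y s t ^ T.ch s (firstVtx hn t) =
      ∏ v ∈ univ.erase T.root, y v.1 (T.parent v).1 := by
  have hch : ∀ s t, T.ch s (firstVtx hn t) =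
      #{v ∈ univ.erase T.root | (v.1, (T.parent v).1) = (s, t)} := by
    intro s t
    rw [ch_eq_card]
    congr 1
    ext v
    simp only [mem_filter, mem_univ, mem_erase, true_and, and_true, Prod.mk.injEq,
      hT.parent_eq_firstVtx_iff hn]
    tauto
  rw [← prod_fiberwise' (univ.erase T.root) (fun v => (v.1, (T.parent v).1)) fun p => y p.1 p.2,
    Fintype.prod_prod_type]
  simp only [prod_const, hch]

end IsStar

end MTree

variable {ρ : Fin d}

/-- A star tree is determined by the type of the parent of each vertex: `A` for the vertices
of label `0`, `f` for the others. -/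
def starParentType (A : Fin d → Fin d) (f : ∀ s, OtherLabel hn s → Fin d) (v : Vtx d n) :
    Fin d :=
  if h : v.2 = ⟨0, hn v.1⟩ then A v.1 else f v.1 ⟨v.2, h⟩

lemma starParentType_firstVtx (A : Fin d → Fin d) (f : ∀ s, OtherLabel hn s → Fin d)
    (s : Fin d) :
    starParentType hn A f (firstVtx hn s) = A s :=
  dif_pos rfl

lemma starParentType_of_ne (A : Fin d → Fin d) (f : ∀ s, OtherLabel hn s → Fin d) (s : Fin d)
    (i : OtherLabel hn s) :
    starParentType hn A f ⟨s, i⟩ = f s i :=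
  dif_neg i.2

lemma starParentType_restrict (P : Vtx d n → Fin d) :
    starParentType hn (P ∘ firstVtx hn) (fun s i => P ⟨s, i⟩) = P := by
  funext ⟨s, i⟩
  by_cases h : i = ⟨0, hn s⟩
  · subst h
    exact starParentType_firstVtx hn _ _ s
  · exact starParentType_of_ne hn _ _ s ⟨i, h⟩

def starTree (A : Cay d ρ) (f : ∀ s, OtherLabel hn s → Fin d) : MTree d n :=
  ⟨(firstVtx hn ρ, firstVtx hn ∘ starParentType hn A.1 f), by
    have hA : Function.Semiconj (firstVtx hn) A.1 (firstVtx hn ∘ starParentType hn A.1 f) :=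
      fun s => congrArg (firstVtx hn) (starParentType_firstVtx hn A.1 f s).symm
    refine ⟨(hA ρ).symm.trans (congrArg _ A.2.1), fun v => ?_⟩
    obtain ⟨k, hk⟩ := A.2.2 (starParentType hn A.1 f v)
    exact ⟨k + 1, (iterate_firstVtx_eq_firstVtx_iff hn hA k _ ρ).2 hk⟩⟩

lemma isStar_starTree (A : Cay d ρ) (f : ∀ s, OtherLabel hn s → Fin d) :
    (starTree hn A f).IsStar :=
  MTree.isStar_of_forall_label_parent_eq_zero _ fun _ => rfl

def MTree.IsStar.toCay {T : MTree d n} (hT : T.IsStar) (hroot : T.root.1 = ρ) : Cay d ρ :=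
  ⟨fun s => (T.parent (firstVtx hn s)).1, by
    have hA : Function.Semiconj (firstVtx hn) (fun s => (T.parent (firstVtx hn s)).1) T.parent :=
      fun s => (hT.parent_eq_firstVtx hn _).symm
    have hr := hT.root_eq_firstVtx hn hroot
    refine ⟨firstVtx_injective hn ?_, fun s => ?_⟩
    · rw [hA ρ, ← hr, T.parent_root]
    · obtain ⟨k, hk⟩ := T.exists_iterate_parent_eq_root (firstVtx hn s)
      exact ⟨k, (iterate_firstVtx_eq_firstVtx_iff hn hA k s ρ).1 (hr ▸ hk)⟩⟩

def starTreeEquiv (ρ : Fin d) :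
    {T : MTree d n // T.root.1 = ρ ∧ T.IsStar} ≃
      Cay d ρ × (∀ s, OtherLabel hn s → Fin d) where
  toFun T := (T.2.2.toCay hn T.2.1, fun s i => (T.1.parent ⟨s, i⟩).1)
  invFun p := ⟨starTree hn p.1 p.2, rfl, isStar_starTree hn p.1 p.2⟩
  left_inv := fun ⟨T, hroot, hT⟩ => by
    refine Subtype.ext (Subtype.ext (Prod.ext ?_ ?_))
    · exact (hT.root_eq_firstVtx hn hroot).symm
    · change firstVtx hn ∘ starParentType hn ((fun v => (T.parent v).1) ∘ firstVtx hn)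
        (fun s i => (T.parent ⟨s, i⟩).1) = T.parent
      rw [starParentType_restrict hn fun v => (T.parent v).1]
      exact funext fun v => (hT.parent_eq_firstVtx hn v).symm
  right_inv := fun ⟨A, f⟩ => by
    refine Prod.ext (Subtype.ext (funext fun s => ?_)) (funext fun s => funext fun i => ?_)
    · exact starParentType_firstVtx hn A.1 f s
    · exact starParentType_of_ne hn A.1 f s i

lemma prod_pow_ch_eq_starTreeEquiv {M : Type*} [CommMonoid M] (y : Fin d → Fin d → M)
    (T : {T : MTree d n // T.root.1 = ρ ∧ T.IsStar}) :
    ∏ s, ∏ t, y s t ^ T.1.ch s (firstVtx hn t) =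
      (∏ s ∈ univ.erase ρ, y s ((starTreeEquiv hn ρ T).1.1 s)) *
        ∏ s, ∏ i, y s ((starTreeEquiv hn ρ T).2 s i) := by
  obtain ⟨T, hroot, hT⟩ := T
  rw [hT.prod_pow_ch hn]
  conv_lhs => rw [hT.root_eq_firstVtx hn hroot]
  exact prod_erase_firstVtx hn ρ fun v => y v.1 (T.parent v).1

theorem sum_prod_pow_ch_starTree {R : Type*} [CommSemiring R] (ρ : Fin d)
    (y : Fin d → Fin d → R) :
    ∑ T : {T : MTree d n // T.root.1 = ρ ∧ T.IsStar},
        ∏ s, ∏ t, y s t ^ T.1.ch s (firstVtx hn t) =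
      (∏ s, (∑ t, y s t) ^ (n s - 1)) *
        ∑ A : Cay d ρ, ∏ s ∈ univ.erase ρ, y s (A.1 s) := by
  calc _ = ∑ p : Cay d ρ × (∀ s, OtherLabel hn s → Fin d),
        (∏ s ∈ univ.erase ρ, y s (p.1.1 s)) * ∏ s, ∏ i, y s (p.2 s i) :=
        Fintype.sum_equiv (starTreeEquiv hn ρ) _ _ (prod_pow_ch_eq_starTreeEquiv hn y)
    _ = (∑ A : Cay d ρ, ∏ s ∈ univ.erase ρ, y s (A.1 s)) *
          ∑ f : ∀ s, OtherLabel hn s → Fin d, ∏ s, ∏ i, y s (f s i) := by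
        rw [Fintype.sum_mul_sum, Fintype.sum_prod_type]
    _ = _ := by
        rw [sum_pi_prod_eq_prod_sum_pow y, mul_comm]
        simp

end StarTrees

/-- **Generating function of star trees (Lemma 7).**
A star tree is a multitype Cayley tree in which every vertex with label `≠ 1` is a
leaf. The generating polynomial of star trees of profile `n` with root type `ρ`,
counted according to the indegrees of the vertices labeled `1`, is
`∏_s (Σ_t y_{s,t})^{n_s−1} · Σ_{A ∈ Cay_d^ρ} ∏_{(s,t)∈A} y_{s,t}`. -/
theorem star_tree_generating_function (d : ℕ) (n : Fin d → ℕ)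
    (hn : ∀ t, 0 < n t) (ρ : Fin d) :
    ∑ T : {T : MTree d n // T.root.1 = ρ ∧
            ∀ (s t : Fin d) (i : Fin (n t)), (i : ℕ) ≠ 0 → T.ch s ⟨t, i⟩ = 0},
        ∏ s : Fin d, ∏ t : Fin d,
          (MvPolynomial.X (s, t) : MvPolynomial (Fin d × Fin d) ℤ) ^
            T.1.ch s ⟨t, ⟨0, hn t⟩⟩
      =
    (∏ s : Fin d,
        (∑ t : Fin d,
          (MvPolynomial.X (s, t) : MvPolynomial (Fin d × Fin d) ℤ)) ^ (n s - 1)) *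
      ∑ A : Cay d ρ, ∏ s ∈ Finset.univ.erase ρ,
        (MvPolynomial.X (s, A.1 s) : MvPolynomial (Fin d × Fin d) ℤ) :=
  sum_prod_pow_ch_starTree hn ρ fun s t => MvPolynomial.X (s, t)
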